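/- arXiv:1103.0491 — 2 statements merged into one kernel-verified Lean document; each statement's English description precedes it below -/
import Mathlib

section
/- For every u₁ > 0 and every k with 2 ≤ k ≤ n, the derivative with respect to u₁ of the function u₁ ↦ (U_k(u₁) − U_{k−1}(u₁))/(U_k(u₁) − U₁(u₁)) is nonnegative (here for k = 2 the quotient is identically 1). -/
open Finset

noncomputable def U (g1 : ℝ → ℝ) (h : ℝ) : ℕ → ℝ → ℝ
  | 0, u => u
  | 1, u => u
  | 2, u => u + h ^ 2 / 2 * g1 u
  | k + 3, u => 2 * U g1 h (k + 2) u - U g1 h (k + 1) u + h ^ 2 * g1 (U g1 h (k + 2) u)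

open Set

/-!
Differentiating the scheme in `u₁` gives `V_k = ∂U_k/∂u₁` by the linearised scheme. With
`D_k = U_{k+1} - U_k` and `E_k = V_{k+1} - V_k`, the derivative of the quotient has the sign of
`E_{k-1} (U_k - U_1) - D_{k-1} (V_k - V_1)`, and `U_k - U_1`, `V_k - V_1` are the partial sums of
the `D_i`, `E_i`; so it suffices that `E_k / D_k = ∂ log D_k / ∂u₁` increases with `k`.
Now `D_{k+1} = D_k + h² g(U_{k+1})` and `E_{k+1} = E_k + h² g'(U_{k+1}) V_{k+1}`, so
`E_{k+1} / D_{k+1}` is a mediant of `E_k / D_k` and `∂ log g(U_{k+1}) / ∂u₁`, and it is enough that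
`E_k / D_k ≤ ∂ log g(U_{k+1}) / ∂u₁`. This invariant propagates from `k` to `k + 1` because `g` is
convex: `g(U_{k+2}) - g(U_{k+1}) ≤ g'(U_{k+2}) D_{k+1}` and `g'(U_{k+1}) ≤ g'(U_{k+2})`.
-/

noncomputable def V (g : ℝ → ℝ) (h : ℝ) : ℕ → ℝ → ℝ
  | 0, _ => 1
  | 1, _ => 1
  | 2, u => 1 + h ^ 2 / 2 * deriv g u
  | k + 3, u => 2 * V g h (k + 2) u - V g h (k + 1) u
      + h ^ 2 * (deriv g (U g h (k + 2) u) * V g h (k + 2) u)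

lemma ConvexOn.sub_le_deriv_mul_sub {S : Set ℝ} {f : ℝ → ℝ} (hf : ConvexOn ℝ S f) {x y : ℝ}
    (hx : x ∈ S) (hy : y ∈ S) (hxy : x ≤ y) (hfd : DifferentiableAt ℝ f y) :
    f y - f x ≤ deriv f y * (y - x) := by
  rcases hxy.eq_or_lt with rfl | hlt
  · simp
  have hslope := hf.slope_le_deriv hx hy hlt hfd
  rwa [slope_def_field, div_le_iff₀ (sub_pos.2 hlt)] at hslope

lemma le_add_div_add_of_div_le {a b c d : ℝ} (hb : 0 < b) (hd : 0 < d) (h : a / b ≤ c / d) :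
    a / b ≤ (a + c) / (b + d) := by
  rw [div_le_div_iff₀ hb hd] at h
  rw [div_le_div_iff₀ hb (add_pos hb hd)]
  linarith

lemma sum_mul_le_mul_sum_of_monotone_div {D E : ℕ → ℝ} (hD : ∀ i, 0 < D i)
    (hED : Monotone fun i => E i / D i) (m : ℕ) :
    (∑ i ∈ range (m + 1), E i) * D m ≤ E m * ∑ i ∈ range (m + 1), D i := by
  rw [sum_mul, mul_sum]
  refine sum_le_sum fun i hi => ?_
  have hi := hED (Nat.lt_succ_iff.mp (mem_range.mp hi))
  rw [div_le_div_iff₀ (hD i) (hD m)] at hi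
  linarith

section

variable {g : ℝ → ℝ} {h : ℝ}

lemma hasDerivAt_U (hd : Differentiable ℝ g) (k : ℕ) (u : ℝ) :
    HasDerivAt (U g h k) (V g h k u) u := by
  induction k, u using U.induct with
  | case1 u | case2 u => exact hasDerivAt_id u
  | case3 u => exact (hasDerivAt_id u).add ((hd u).hasDerivAt.const_mul _)
  | case4 k u ih₂ ih₁ =>
    exact ((ih₂.const_mul 2).sub ih₁).add (((hd _).hasDerivAt.comp u ih₂).const_mul _)

lemma U_two_sub_one (u : ℝ) : U g h 2 u - U g h 1 u = h ^ 2 / 2 * g u := by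
  rw [U, U]; ring

lemma V_two_sub_one (u : ℝ) : V g h 2 u - V g h 1 u = h ^ 2 / 2 * deriv g u := by
  rw [V, V]; ring

lemma U_add_three_sub (k : ℕ) (u : ℝ) :
    U g h (k + 3) u - U g h (k + 2) u
      = U g h (k + 2) u - U g h (k + 1) u + h ^ 2 * g (U g h (k + 2) u) := by
  rw [U]; ring

lemma V_add_three_sub (k : ℕ) (u : ℝ) :
    V g h (k + 3) u - V g h (k + 2) u
      = V g h (k + 2) u - V g h (k + 1) u
        + h ^ 2 * (deriv g (U g h (k + 2) u) * V g h (k + 2) u) := by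
  rw [V]; ring

variable {u : ℝ}

lemma U_succ_pos_and_lt (hg : ∀ x > 0, 0 < g x) (hh : h ≠ 0) (hu : 0 < u) (k : ℕ) :
    0 < U g h (k + 1) u ∧ U g h (k + 1) u < U g h (k + 2) u := by
  induction k with
  | zero =>
    have := hg u hu
    refine ⟨hu, sub_pos.1 ?_⟩
    rw [U_two_sub_one]
    positivity
  | succ k ih =>
    have hpos := ih.1.trans ih.2
    have := hg _ hpos
    refine ⟨hpos, sub_pos.1 ?_⟩
    rw [U_add_three_sub]
    exact add_pos (sub_pos.2 ih.2) (by positivity)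

lemma one_le_V_succ_and_le (hg : ∀ x > 0, 0 < g x) (hg' : ∀ x > 0, 0 ≤ deriv g x) (hh : h ≠ 0)
    (hu : 0 < u) (k : ℕ) :
    1 ≤ V g h (k + 1) u ∧ V g h (k + 1) u ≤ V g h (k + 2) u := by
  induction k with
  | zero =>
    have := hg' u hu
    refine ⟨le_rfl, sub_nonneg.1 ?_⟩
    rw [V_two_sub_one]
    positivity
  | succ k ih =>
    have hV : 1 ≤ V g h (k + 2) u := ih.1.trans ih.2
    have := hg' _ (U_succ_pos_and_lt hg hh hu (k + 1)).1
    refine ⟨hV, sub_nonneg.1 ?_⟩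
    rw [V_add_three_sub]
    exact add_nonneg (sub_nonneg.2 ih.2) (by positivity)

/-- The invariant `E_{k+1} / D_{k+1} ≤ ∂ log g(U_{k+2}) / ∂u` of the header, cleared of denominators. -/
lemma V_sub_mul_g_le (hd : Differentiable ℝ g) (hconv : ConvexOn ℝ (Ioi 0) g)
    (hg : ∀ x > 0, 0 < g x) (hg' : ∀ x > 0, 0 ≤ deriv g x) (hh : h ≠ 0) (hu : 0 < u) (k : ℕ) :
    (V g h (k + 2) u - V g h (k + 1) u) * g (U g h (k + 2) u)
      ≤ deriv g (U g h (k + 2) u) * V g h (k + 2) u * (U g h (k + 2) u - U g h (k + 1) u) := by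
  have hmono : MonotoneOn (deriv g) (Ioi 0) := hconv.monotoneOn_deriv fun x _ => hd x
  have htangent {a b : ℝ} (ha : 0 < a) (hab : a ≤ b) : g b - g a ≤ deriv g b * (b - a) :=
    hconv.sub_le_deriv_mul_sub ha (ha.trans_le hab) hab (hd b)
  induction k with
  | zero =>
    have hlt : u < U g h 2 u := (U_succ_pos_and_lt hg hh hu 0).2
    have hU : U g h 2 u - u = h ^ 2 / 2 * g u := U_two_sub_one u
    have hV : V g h 2 u = 1 + h ^ 2 / 2 * deriv g u := rfl
    have hV1 : V g h 1 u = 1 := rfl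
    have hc : 0 ≤ h ^ 2 / 2 := by positivity
    have ht := mul_le_mul_of_nonneg_left (htangent hu hlt.le) (mul_nonneg hc (hg' u hu))
    have hm := mul_le_mul_of_nonneg_left (hmono hu (hu.trans hlt) hlt.le)
      (mul_nonneg hc (hg u hu).le)
    show (V g h 2 u - V g h 1 u) * g (U g h 2 u)
      ≤ deriv g (U g h 2 u) * V g h 2 u * (U g h 2 u - u)
    rw [hV, hV1]
    linear_combination ht + hm - deriv g (U g h 2 u) * hU
  | succ k ih =>
    obtain ⟨ha, hab⟩ := U_succ_pos_and_lt hg hh hu (k + 1)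
    obtain ⟨hV, hVle⟩ := one_le_V_succ_and_le hg hg' hh hu (k + 1)
    have hE : 0 ≤ V g h (k + 3) u - V g h (k + 2) u := sub_nonneg.2 hVle
    have hVD : 0 ≤ V g h (k + 2) u * (U g h (k + 3) u - U g h (k + 2) u) :=
      mul_nonneg (by linarith) (sub_nonneg.2 hab.le)
    have hstep : (V g h (k + 3) u - V g h (k + 2) u) * g (U g h (k + 2) u)
        ≤ deriv g (U g h (k + 2) u) * V g h (k + 2) u * (U g h (k + 3) u - U g h (k + 2) u) := by
      rw [U_add_three_sub, V_add_three_sub]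
      linear_combination ih
    have hm := mul_le_mul_of_nonneg_right (hmono ha (ha.trans hab) hab.le) hVD
    have ht := mul_le_mul_of_nonneg_left (htangent ha hab.le) hE
    show (V g h (k + 3) u - V g h (k + 2) u) * g (U g h (k + 3) u)
      ≤ deriv g (U g h (k + 3) u) * V g h (k + 3) u * (U g h (k + 3) u - U g h (k + 2) u)
    linear_combination hstep + hm + ht

lemma monotone_V_sub_div_U_sub (hd : Differentiable ℝ g) (hconv : ConvexOn ℝ (Ioi 0) g)
    (hg : ∀ x > 0, 0 < g x) (hg' : ∀ x > 0, 0 ≤ deriv g x) (hh : h ≠ 0) (hu : 0 < u) :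
    Monotone fun k => (V g h (k + 2) u - V g h (k + 1) u) / (U g h (k + 2) u - U g h (k + 1) u) := by
  have hD (k : ℕ) : 0 < U g h (k + 2) u - U g h (k + 1) u :=
    sub_pos.2 (U_succ_pos_and_lt hg hh hu k).2
  refine monotone_nat_of_le_succ fun k => ?_
  have hgD : 0 < h ^ 2 * g (U g h (k + 2) u) := by
    have := hg _ (U_succ_pos_and_lt hg hh hu (k + 1)).1
    positivity
  show _ ≤ (V g h (k + 3) u - V g h (k + 2) u) / (U g h (k + 3) u - U g h (k + 2) u)
  rw [U_add_three_sub, V_add_three_sub]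
  refine le_add_div_add_of_div_le (hD k) hgD ?_
  rw [div_le_div_iff₀ (hD k) hgD]
  linear_combination h ^ 2 * V_sub_mul_g_le hd hconv hg hg' hh hu k

theorem deriv_U_sub_div_U_sub_nonneg (hd : Differentiable ℝ g) (hconv : ConvexOn ℝ (Ioi 0) g)
    (hg : ∀ x > 0, 0 < g x) (hg' : ∀ x > 0, 0 ≤ deriv g x) (hh : h ≠ 0) (hu : 0 < u) (j : ℕ) :
    0 ≤ deriv (fun x => (U g h (j + 2) x - U g h (j + 1) x) / (U g h (j + 2) x - U g h 1 x)) u := by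
  have hD (k : ℕ) : 0 < U g h (k + 2) u - U g h (k + 1) u :=
    sub_pos.2 (U_succ_pos_and_lt hg hh hu k).2
  have hsumU : ∑ i ∈ range (j + 1), (U g h (i + 2) u - U g h (i + 1) u)
      = U g h (j + 2) u - U g h 1 u := sum_range_sub (fun i => U g h (i + 1) u) (j + 1)
  have hsumV : ∑ i ∈ range (j + 1), (V g h (i + 2) u - V g h (i + 1) u)
      = V g h (j + 2) u - V g h 1 u := sum_range_sub (fun i => V g h (i + 1) u) (j + 1)
  have hkey := sum_mul_le_mul_sum_of_monotone_div hD
    (monotone_V_sub_div_U_sub hd hconv hg hg' hh hu) j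
  simp only [hsumU, hsumV] at hkey
  have hW : 0 < U g h (j + 2) u - U g h 1 u := by
    rw [← hsumU]
    exact sum_pos (fun i _ => hD i) nonempty_range_add_one
  have hU (k : ℕ) := hasDerivAt_U (h := h) hd k u
  have hquot : HasDerivAt
      (fun x => (U g h (j + 2) x - U g h (j + 1) x) / (U g h (j + 2) x - U g h 1 x))
      (((V g h (j + 2) u - V g h (j + 1) u) * (U g h (j + 2) u - U g h 1 u)
        - (U g h (j + 2) u - U g h (j + 1) u) * (V g h (j + 2) u - V g h 1 u))
        / (U g h (j + 2) u - U g h 1 u) ^ 2) u :=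
    ((hU _).sub (hU _)).div ((hU _).sub (hU _)) hW.ne'
  rw [hquot.deriv]
  exact div_nonneg (by linarith) (sq_nonneg _)

end

theorem stmt7_general
    (g1 : ℝ → ℝ)
    (hg1C : ContDiff ℝ 3 g1)
    (hg10 : g1 0 = 0)
    (hg1d1 : ∀ x > 0, 0 < deriv g1 x)
    (hg1d2 : ∀ x > 0, 0 < iteratedDeriv 2 g1 x)
    (n : ℕ) (hn : 2 ≤ n) (h : ℝ) (hh : h = 1 / ((n : ℝ) - 1))
    (u1 : ℝ) (hu1 : 0 < u1) (k : ℕ) (hk2 : 2 ≤ k) :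
    0 ≤ deriv (fun x => (U g1 h k x - U g1 h (k - 1) x) / (U g1 h k x - U g1 h 1 x)) u1 := by
  obtain ⟨j, rfl⟩ : ∃ j, k = j + 2 := ⟨k - 2, by omega⟩
  have hd : Differentiable ℝ g1 := hg1C.differentiable (by norm_num)
  have hd' : Differentiable ℝ (deriv g1) := by
    simpa only [iteratedDeriv_one] using hg1C.differentiable_iteratedDeriv 1 (by norm_num)
  have hconv : ConvexOn ℝ (Ioi 0) g1 :=
    convexOn_of_deriv2_nonneg' (convex_Ioi 0) hd.differentiableOn hd'.differentiableOn
      fun x hx => by simpa only [iteratedDeriv_eq_iterate] using (hg1d2 x hx).le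
  have hg1mono : StrictMonoOn g1 (Ici 0) :=
    strictMonoOn_of_deriv_pos (convex_Ici 0) hd.continuous.continuousOn
      fun x hx => hg1d1 x (by rwa [interior_Ici] at hx)
  have hg : ∀ x > 0, 0 < g1 x := fun x hx => hg10 ▸ hg1mono self_mem_Ici (le_of_lt hx) hx
  have hh0 : h ≠ 0 := by
    rw [hh]
    exact one_div_ne_zero (sub_ne_zero.2 (Nat.one_lt_cast.2 hn).ne')
  exact deriv_U_sub_div_U_sub_nonneg hd hconv hg (fun x hx => (hg1d1 x hx).le) hh0 hu1 j

theorem stmt7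
    (g1 g2 : ℝ → ℝ)
    (hg1C : ContDiff ℝ 3 g1) (hg2C : ContDiff ℝ 3 g2)
    (hg1A : AnalyticAt ℝ g1 0) (hg2A : AnalyticAt ℝ g2 0)
    (hg10 : g1 0 = 0) (hg20 : g2 0 = 0)
    (hg1d1 : ∀ x > 0, 0 < deriv g1 x) (hg2d1 : ∀ x > 0, 0 < deriv g2 x)
    (hg1d2 : ∀ x > 0, 0 < iteratedDeriv 2 g1 x) (hg2d2 : ∀ x > 0, 0 < iteratedDeriv 2 g2 x)
    (hg1d3 : ∀ x > 0, 0 ≤ iteratedDeriv 3 g1 x) (hg2d3 : ∀ x > 0, 0 ≤ iteratedDeriv 3 g2 x)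
    (n : ℕ) (hn : 2 ≤ n) (h : ℝ) (hh : h = 1 / ((n : ℝ) - 1))
    (u1 : ℝ) (hu1 : 0 < u1) (k : ℕ) (hk2 : 2 ≤ k) (hkn : k ≤ n) :
    0 ≤ deriv (fun x => (U g1 h k x - U g1 h (k - 1) x) / (U g1 h k x - U g1 h 1 x)) u1 :=
  stmt7_general g1 hg1C hg10 hg1d1 hg1d2 n hn h hh u1 hu1 k hk2
end

section
/- If the function g := g₁/g₂ is strictly decreasing on (0, ∞), then the function A satisfies A'(u₁) < 0 for every u₁ > 0. -/
/-!
Let `W_k = ∂U_k/∂u`. The discrete quantity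
`Z_k = (W_{k+1} - W_k) g₁(U_{k+1}) - (U_{k+1} - U_k) g₁'(U_{k+1}) W_{k+1}` vanishes at `k = 0` and
strictly decreases in `k`: convexity of `g₁` bounds `g₁(U_{k+2})`, and what is left is
`W_{k+1} (U_{k+2} - U_{k+1}) (g₁'(U_{k+1}) - g₁'(U_{k+2})) < 0`. If `S` is the numerator of `A`,
then `S' g₁(U_n) - S g₁'(U_n) W_n = Z_{n-1} / h < 0`, i.e. `S / g₁(U_n)` decreases, and `A` is
its product with `(g₁/g₂)(U_n)`, which does not increase.
-/

open Finset

noncomputable def Afun (g1 g2 : ℝ → ℝ) (n : ℕ) (h : ℝ) (u : ℝ) : ℝ :=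
  ((U g1 h n u - U g1 h (n - 1) u) / h + h / 2 * g1 (U g1 h n u)) / g2 (U g1 h n u)

open Set

lemma deriv_mul_le_mul_deriv_of_antitoneOn_div {f g : ℝ → ℝ} {s : Set ℝ} {x : ℝ}
    (hfg : AntitoneOn (fun y => f y / g y) s) (hs : s ∈ nhds x) (hf : DifferentiableAt ℝ f x)
    (hg : DifferentiableAt ℝ g x) (hgx : g x ≠ 0) :
    deriv f x * g x ≤ f x * deriv g x := by
  have hderiv := (hf.hasDerivAt.fun_div hg.hasDerivAt hgx).deriv
  have hnonpos := hfg.derivWithin_nonpos (x := x)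
  rw [derivWithin_of_mem_nhds hs, hderiv, div_nonpos_iff] at hnonpos
  have : 0 < g x ^ 2 := by positivity
  rcases hnonpos with ⟨-, h2⟩ | ⟨h1, -⟩ <;> linarith

/-- `S / b = (S / a) * (a / b)`, whose first factor decreases and second does not increase. -/
lemma mul_sub_mul_neg_of_mul_sub_mul_neg {S S' W a a' b b' : ℝ} (hS : 0 < S) (hW : 0 < W)
    (ha : 0 < a) (hb : 0 < b) (hSa : S' * a - S * (a' * W) < 0) (hab : a' * b ≤ a * b') :
    S' * b - S * (b' * W) < 0 := by
  have key : (S' * b - S * (b' * W)) * a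
      = b * (S' * a - S * (a' * W)) + S * W * (a' * b - a * b') := by
    ring
  have : (S' * b - S * (b' * W)) * a < 0 := by
    rw [key]
    nlinarith [mul_pos hS hW, mul_neg_of_pos_of_neg hb hSa]
  exact neg_of_mul_neg_left this ha.le

lemma pos_of_deriv_pos {f : ℝ → ℝ} (hf : Continuous f) (hf0 : f 0 = 0)
    (hf' : ∀ x > 0, 0 < deriv f x) {x : ℝ} (hx : 0 < x) : 0 < f x :=
  hf0 ▸ strictMonoOn_of_deriv_pos (convex_Ici 0) hf.continuousOn
    (by rw [interior_Ici]; exact hf') self_mem_Ici hx.le hx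

lemma ConvexOn.le_add_deriv_mul_sub {f : ℝ → ℝ} {S : Set ℝ} {x y : ℝ} (hf : ConvexOn ℝ S f)
    (hx : x ∈ S) (hy : y ∈ S) (hxy : x < y) (hfy : DifferentiableAt ℝ f y) :
    f y ≤ f x + deriv f y * (y - x) := by
  have := hf.slope_le_deriv hx hy hxy hfy
  rw [slope_def_field, div_le_iff₀ (sub_pos.mpr hxy)] at this
  linarith

lemma le_and_lt_of_second_diff_pos {x : ℕ → ℝ} (h01 : x 0 = x 1) (hx0 : 0 < x 0)
    (hx : ∀ k, 0 < x (k + 1) → x (k + 1) - x k < x (k + 2) - x (k + 1)) :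
    ∀ k, x 0 ≤ x (k + 1) ∧ x (k + 1) < x (k + 2)
  | 0 => ⟨h01.le, by linarith [hx 0 (h01 ▸ hx0)]⟩
  | k + 1 => by
    obtain ⟨hle, hlt⟩ := le_and_lt_of_second_diff_pos h01 hx0 hx k
    exact ⟨hle.trans hlt.le, by linarith [hx (k + 1) (by linarith)]⟩

/-- The first step of the scheme is a half step: with `U 0 = U 1 = u` the recursion
`U (k + 2) = 2 U (k + 1) - U k + c_k g₁ (U (k + 1))` holds for all `k` once `c_0 = h² / 2`. -/
noncomputable def stepCoef (h : ℝ) (k : ℕ) : ℝ := if k = 0 then h ^ 2 / 2 else h ^ 2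

lemma stepCoef_pos {h : ℝ} (hh : h ≠ 0) (k : ℕ) : 0 < stepCoef h k := by
  unfold stepCoef
  split_ifs <;> positivity

lemma U_add_two (g1 : ℝ → ℝ) (h : ℝ) (k : ℕ) (u : ℝ) :
    U g1 h (k + 2) u
      = 2 * U g1 h (k + 1) u - U g1 h k u + stepCoef h k * g1 (U g1 h (k + 1) u) := by
  rcases k with _ | k
  · simp only [U, stepCoef, if_pos]; ring
  · simp [U, stepCoef]

noncomputable def Uderiv (g1 : ℝ → ℝ) (h : ℝ) : ℕ → ℝ → ℝ
  | 0, _ => 1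
  | 1, _ => 1
  | k + 2, u => 2 * Uderiv g1 h (k + 1) u - Uderiv g1 h k u
      + stepCoef h k * deriv g1 (U g1 h (k + 1) u) * Uderiv g1 h (k + 1) u

theorem hasDerivAt_U_s10 {g1 : ℝ → ℝ} (hg : Differentiable ℝ g1) (h u : ℝ) :
    ∀ k, HasDerivAt (U g1 h k) (Uderiv g1 h k u) u
  | 0 => hasDerivAt_id u
  | 1 => hasDerivAt_id u
  | k + 2 => by
    rw [show U g1 h (k + 2) = _ from funext (U_add_two g1 h k)]
    have hcomp := (hg _).hasDerivAt.comp u (hasDerivAt_U_s10 hg h u (k + 1))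
    exact ((((hasDerivAt_U_s10 hg h u (k + 1)).const_mul 2).sub (hasDerivAt_U_s10 hg h u k)).add
      (hcomp.const_mul (stepCoef h k))).congr_deriv (by simp only [Uderiv]; ring)

section Scheme

variable {g1 : ℝ → ℝ} {h u : ℝ}

lemma le_U_and_U_lt (hh : h ≠ 0) (hg1 : ∀ x > 0, 0 < g1 x) (hu : 0 < u) (k : ℕ) :
    u ≤ U g1 h (k + 1) u ∧ U g1 h (k + 1) u < U g1 h (k + 2) u :=
  le_and_lt_of_second_diff_pos (x := fun k => U g1 h k u) rfl hu (fun k hk => by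
    simp only [U_add_two]
    linarith [mul_pos (stepCoef_pos hh k) (hg1 _ hk)]) k

lemma one_le_Uderiv_and_Uderiv_lt (hh : h ≠ 0) (hg1 : ∀ x > 0, 0 < g1 x)
    (hg1' : ∀ x > 0, 0 < deriv g1 x) (hu : 0 < u) (k : ℕ) :
    1 ≤ Uderiv g1 h (k + 1) u ∧ Uderiv g1 h (k + 1) u < Uderiv g1 h (k + 2) u :=
  le_and_lt_of_second_diff_pos (x := fun k => Uderiv g1 h k u) rfl one_pos (fun k hk => by
    have hU := hg1' _ (hu.trans_le (le_U_and_U_lt hh hg1 hu k).1)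
    simp only [Uderiv]
    linarith [mul_pos (mul_pos (stepCoef_pos hh k) hU) hk]) k

variable (g1 h u) in
noncomputable def cross (k : ℕ) : ℝ :=
  (Uderiv g1 h (k + 1) u - Uderiv g1 h k u) * g1 (U g1 h (k + 1) u)
    - (U g1 h (k + 1) u - U g1 h k u) * deriv g1 (U g1 h (k + 1) u) * Uderiv g1 h (k + 1) u

lemma cross_zero : cross g1 h u 0 = 0 := by
  simp [cross, U, Uderiv]

lemma cross_succ_le (k : ℕ)
    (hconv : g1 (U g1 h (k + 2) u) ≤ g1 (U g1 h (k + 1) u)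
      + deriv g1 (U g1 h (k + 2) u) * (U g1 h (k + 2) u - U g1 h (k + 1) u))
    (hW : Uderiv g1 h (k + 1) u ≤ Uderiv g1 h (k + 2) u) :
    cross g1 h u (k + 1) ≤ cross g1 h u k + Uderiv g1 h (k + 1) u
      * (U g1 h (k + 2) u - U g1 h (k + 1) u)
      * (deriv g1 (U g1 h (k + 1) u) - deriv g1 (U g1 h (k + 2) u)) := by
  have hU2 := U_add_two g1 h k u
  have hW2 : Uderiv g1 h (k + 2) u = 2 * Uderiv g1 h (k + 1) u - Uderiv g1 h k u
      + stepCoef h k * deriv g1 (U g1 h (k + 1) u) * Uderiv g1 h (k + 1) u := rfl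
  simp only [cross]
  linear_combination (Uderiv g1 h (k + 2) u - Uderiv g1 h (k + 1) u) * hconv
    + g1 (U g1 h (k + 1) u) * hW2
    - Uderiv g1 h (k + 1) u * deriv g1 (U g1 h (k + 1) u) * hU2

lemma cross_succ_lt (hg1d : Differentiable ℝ g1) (hh : h ≠ 0) (hg1 : ∀ x > 0, 0 < g1 x)
    (hg1' : ∀ x > 0, 0 < deriv g1 x) (hmono : StrictMonoOn (deriv g1) (Ioi 0)) (hu : 0 < u)
    (k : ℕ) : cross g1 h u (k + 1) < cross g1 h u k := by
  have hconv : ConvexOn ℝ (Ioi 0) g1 :=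
    MonotoneOn.convexOn_of_deriv (convex_Ioi 0) hg1d.continuous.continuousOn
      hg1d.differentiableOn (by rw [interior_Ioi]; exact hmono.monotoneOn)
  obtain ⟨hle, hlt⟩ := le_U_and_U_lt hh hg1 hu k
  obtain ⟨hW1, hW⟩ := one_le_Uderiv_and_Uderiv_lt hh hg1 hg1' hu k
  have hx : 0 < U g1 h (k + 1) u := hu.trans_le hle
  have hy : 0 < U g1 h (k + 2) u := hx.trans hlt
  have hdrop : Uderiv g1 h (k + 1) u * (U g1 h (k + 2) u - U g1 h (k + 1) u)
      * (deriv g1 (U g1 h (k + 1) u) - deriv g1 (U g1 h (k + 2) u)) < 0 :=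
    mul_neg_of_pos_of_neg (mul_pos (by linarith) (sub_pos.mpr hlt))
      (sub_neg.mpr (hmono hx hy hlt))
  linarith [cross_succ_le k (hconv.le_add_deriv_mul_sub hx hy hlt (hg1d _)) hW.le]

lemma cross_succ_neg (hg1d : Differentiable ℝ g1) (hh : h ≠ 0) (hg1 : ∀ x > 0, 0 < g1 x)
    (hg1' : ∀ x > 0, 0 < deriv g1 x) (hmono : StrictMonoOn (deriv g1) (Ioi 0)) (hu : 0 < u)
    (k : ℕ) : cross g1 h u (k + 1) < 0 :=
  cross_zero (g1 := g1) (h := h) (u := u) ▸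
    strictAnti_nat_of_succ_lt (cross_succ_lt hg1d hh hg1 hg1' hmono hu) k.succ_pos

variable (g1 h) in
/-- With `n = m + 2`, this is the numerator `(U_n - U_{n-1}) / h + (h / 2) g₁(U_n)` of `A`. -/
noncomputable def boundarySlope (m : ℕ) (u : ℝ) : ℝ :=
  (U g1 h (m + 2) u - U g1 h (m + 1) u) / h + h / 2 * g1 (U g1 h (m + 2) u)

variable (g1 h) in
noncomputable def boundarySlopeDeriv (m : ℕ) (u : ℝ) : ℝ :=
  (Uderiv g1 h (m + 2) u - Uderiv g1 h (m + 1) u) / h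
    + h / 2 * (deriv g1 (U g1 h (m + 2) u) * Uderiv g1 h (m + 2) u)

lemma hasDerivAt_boundarySlope (hg1d : Differentiable ℝ g1) (m : ℕ) :
    HasDerivAt (boundarySlope g1 h m) (boundarySlopeDeriv g1 h m u) u :=
  (((hasDerivAt_U_s10 hg1d h u (m + 2)).sub (hasDerivAt_U_s10 hg1d h u (m + 1))).div_const h).add
    (((hg1d _).hasDerivAt.comp u (hasDerivAt_U_s10 hg1d h u (m + 2))).const_mul (h / 2))

lemma boundarySlope_pos (hh : 0 < h) (hg1 : ∀ x > 0, 0 < g1 x) (hu : 0 < u) (m : ℕ) :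
    0 < boundarySlope g1 h m u := by
  obtain ⟨hle, hlt⟩ := le_U_and_U_lt hh.ne' hg1 hu m
  have := hg1 _ ((hu.trans_le hle).trans hlt)
  unfold boundarySlope
  have := div_pos (sub_pos.mpr hlt) hh
  positivity

lemma boundarySlopeDeriv_mul_sub (hh : h ≠ 0) (m : ℕ) :
    boundarySlopeDeriv g1 h m u * g1 (U g1 h (m + 2) u)
      - boundarySlope g1 h m u * (deriv g1 (U g1 h (m + 2) u) * Uderiv g1 h (m + 2) u)
      = cross g1 h u (m + 1) / h := by
  simp only [boundarySlopeDeriv, boundarySlope, cross]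
  field_simp
  ring

end Scheme

theorem stmt10_general
    (g1 g2 : ℝ → ℝ)
    (hg1C : ContDiff ℝ 3 g1) (hg2C : ContDiff ℝ 3 g2)
    (hg10 : g1 0 = 0) (hg20 : g2 0 = 0)
    (hg1d1 : ∀ x > 0, 0 < deriv g1 x) (hg2d1 : ∀ x > 0, 0 < deriv g2 x)
    (hg1d2 : ∀ x > 0, 0 < iteratedDeriv 2 g1 x)
    (n : ℕ) (hn : 2 ≤ n) (h : ℝ) (hh : h = 1 / ((n : ℝ) - 1))
    (hdec : StrictAntiOn (fun x => g1 x / g2 x) (Set.Ioi 0)) :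
    ∀ u1 > (0 : ℝ), deriv (Afun g1 g2 n h) u1 < 0 := by
  intro u hu
  obtain ⟨m, rfl⟩ : ∃ m, n = m + 2 := ⟨n - 2, by omega⟩
  have hh0 : 0 < h := by
    rw [hh]; push_cast; exact one_div_pos.mpr (by linarith [m.cast_nonneg (α := ℝ)])
  have hg1d : Differentiable ℝ g1 := hg1C.differentiable (by norm_num)
  have hg2d : Differentiable ℝ g2 := hg2C.differentiable (by norm_num)
  have hg1 : ∀ x > 0, 0 < g1 x := fun _ => pos_of_deriv_pos hg1d.continuous hg10 hg1d1
  have hg2 : ∀ x > 0, 0 < g2 x := fun _ => pos_of_deriv_pos hg2d.continuous hg20 hg2d1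
  have hmono : StrictMonoOn (deriv g1) (Ioi 0) :=
    strictMonoOn_of_deriv_pos (convex_Ioi 0) (hg1C.continuous_deriv (by norm_num)).continuousOn
      (by rw [interior_Ioi]; simpa [iteratedDeriv_succ] using hg1d2)
  have hx : 0 < U g1 h (m + 2) u := hu.trans_le (le_U_and_U_lt hh0.ne' hg1 hu (m + 1)).1
  have hW : 0 < Uderiv g1 h (m + 2) u :=
    one_pos.trans_le (one_le_Uderiv_and_Uderiv_lt hh0.ne' hg1 hg1d1 hu (m + 1)).1
  have hcross := boundarySlopeDeriv_mul_sub (u := u) (g1 := g1) hh0.ne' m ▸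
    div_neg_of_neg_of_pos (cross_succ_neg hg1d hh0.ne' hg1 hg1d1 hmono hu m) hh0
  have hratio := deriv_mul_le_mul_deriv_of_antitoneOn_div hdec.antitoneOn (Ioi_mem_nhds hx)
    (hg1d _) (hg2d _) (hg2 _ hx).ne'
  have hA : HasDerivAt (Afun g1 g2 (m + 2) h) _ u := (hasDerivAt_boundarySlope hg1d m).fun_div
    ((hg2d _).hasDerivAt.comp u (hasDerivAt_U_s10 hg1d h u (m + 2))) (hg2 _ hx).ne'
  rw [hA.deriv]
  exact div_neg_of_neg_of_pos (mul_sub_mul_neg_of_mul_sub_mul_neg (boundarySlope_pos hh0 hg1 hu m)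
    hW (hg1 _ hx) (hg2 _ hx) hcross hratio) (pow_pos (hg2 _ hx) 2)

theorem stmt10
    (g1 g2 : ℝ → ℝ)
    (hg1C : ContDiff ℝ 3 g1) (hg2C : ContDiff ℝ 3 g2)
    (hg1A : AnalyticAt ℝ g1 0) (hg2A : AnalyticAt ℝ g2 0)
    (hg10 : g1 0 = 0) (hg20 : g2 0 = 0)
    (hg1d1 : ∀ x > 0, 0 < deriv g1 x) (hg2d1 : ∀ x > 0, 0 < deriv g2 x)
    (hg1d2 : ∀ x > 0, 0 < iteratedDeriv 2 g1 x) (hg2d2 : ∀ x > 0, 0 < iteratedDeriv 2 g2 x)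
    (hg1d3 : ∀ x > 0, 0 ≤ iteratedDeriv 3 g1 x) (hg2d3 : ∀ x > 0, 0 ≤ iteratedDeriv 3 g2 x)
    (n : ℕ) (hn : 2 ≤ n) (h : ℝ) (hh : h = 1 / ((n : ℝ) - 1))
    (hdec : StrictAntiOn (fun x => g1 x / g2 x) (Set.Ioi 0)) :
    ∀ u1 > (0 : ℝ), deriv (Afun g1 g2 n h) u1 < 0 :=
  stmt10_general g1 g2 hg1C hg2C hg10 hg20 hg1d1 hg2d1 hg1d2 n hn h hh hdec
end
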